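/- The lower-triangular matrix F̄ with entries f̄_{nk} = (1/λ_n)[(λ_k − λ_{k-1}) f_k/f_{k+1} − (λ_{k+1} − λ_k) f_{k+2}/f_{k+1}] for k < n, f̄_{nn} = (1/λ_n)(λ_n − λ_{n-1}) f_n/f_{n+1}, and f̄_{nk} = 0 for k > n, has the two-sided inverse given by f̄⁻¹_{nk} = λ_k f_{n+1}² [1/((λ_k − λ_{k-1}) f_k f_{k+1}) − 1/((λ_{k+1} − λ_k) f_{k+1} f_{k+2})] for 0 ≤ k < n, f̄⁻¹_{nn} = λ_n f_{n+1}² /((λ_n − λ_{n-1}) f_n f_{n+1}), and f̄⁻¹_{nk} = 0 for k > n; i.e. ∑_j f̄_{nj} f̄⁻¹_{jk} = δ_{nk} for all n, k. -/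

import Mathlib

open Filter Finset

noncomputable def fibR : ℕ → ℝ
  | 0 => 1
  | 1 => 1
  | (n + 2) => fibR (n + 1) + fibR n

noncomputable def Fhat (x : ℕ → ℝ) (n : ℕ) : ℝ :=
  fibR n / fibR (n + 1) * x n - fibR (n + 1) / fibR n * (if n = 0 then 0 else x (n - 1))

noncomputable def Fbar (Λ : ℕ → ℝ) (x : ℕ → ℝ) (n : ℕ) : ℝ :=
  (1 / Λ n) * ∑ k ∈ Finset.range (n + 1),
    (Λ k - if k = 0 then 0 else Λ (k - 1)) *
      (fibR k / fibR (k + 1) * x k -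
        fibR (k + 1) / fibR k * (if k = 0 then 0 else x (k - 1)))

noncomputable def Fmat (Λ : ℕ → ℝ) (n k : ℕ) : ℝ :=
  if k < n then
    (1 / Λ n) * ((Λ k - if k = 0 then 0 else Λ (k - 1)) * fibR k / fibR (k + 1)
      - (Λ (k + 1) - Λ k) * fibR (k + 2) / fibR (k + 1))
  else if k = n then
    (1 / Λ n) * ((Λ n - if n = 0 then 0 else Λ (n - 1)) * fibR n / fibR (n + 1))
  else 0

noncomputable def FmatInv (Λ : ℕ → ℝ) (n k : ℕ) : ℝ :=
  if k < n then
    Λ k * fibR (n + 1) ^ 2 *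
      (1 / ((Λ k - if k = 0 then 0 else Λ (k - 1)) * (fibR k * fibR (k + 1)))
        - 1 / ((Λ (k + 1) - Λ k) * (fibR (k + 1) * fibR (k + 2))))
  else if k = n then
    Λ n * fibR (n + 1) ^ 2 /
      ((Λ n - if n = 0 then 0 else Λ (n - 1)) * (fibR n * fibR (n + 1)))
  else 0

/-!
With `g k = (λ_k - λ_{k-1}) f_k f_{k+1}` and `w j = f_{j+1}²`, the entries become
`f̄_{nj} = (g j - g (j+1)) / (λ_n w j)` for `j < n`, `f̄_{nn} = g n / (λ_n w n)`, and
`f̄⁻¹_{jk} = λ_k w j (1/g k - 1/g (k+1))`, `f̄⁻¹_{kk} = λ_k w k / g k`.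
Since `f̄⁻¹_{jk}` depends on `j > k` only through the factor `w j`, the off-diagonal part of
row `n` of the product is `λ_k (1/g k - 1/g (k+1))` times the telescoping sum
`∑_{j=k+1}^{n} f̄_{nj} w j = g (k+1) / λ_n`; the remaining term `f̄_{nk} f̄⁻¹_{kk}` cancels it.
-/

section Telescoping

variable (g w Λ : ℕ → ℝ)

noncomputable def telescopingMatrix (n j : ℕ) : ℝ :=
  if j < n then (g j - g (j + 1)) / (Λ n * w j)
  else if j = n then g n / (Λ n * w n) else 0

noncomputable def telescopingMatrixInv (j k : ℕ) : ℝ :=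
  if k < j then Λ k * w j * ((g k)⁻¹ - (g (k + 1))⁻¹)
  else if k = j then Λ k * w k / g k else 0

variable {g w Λ}

theorem telescopingMatrixInv_of_lt {j k : ℕ} (h : j < k) :
    telescopingMatrixInv g w Λ j k = 0 := by
  rw [telescopingMatrixInv, if_neg h.not_gt, if_neg h.ne']

theorem sum_Ico_telescopingMatrix_mul (hw : ∀ j, w j ≠ 0) {m n : ℕ} (hmn : m ≤ n) :
    ∑ j ∈ Ico m (n + 1), telescopingMatrix g w Λ n j * w j = g m / Λ n := by
  have hlt : ∀ j ∈ Ico m n, telescopingMatrix g w Λ n j * w j = (g j - g (j + 1)) / Λ n := by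
    intro j hj
    rw [telescopingMatrix, if_pos (mem_Ico.mp hj).2]
    field_simp [hw j]
  have hdiag : telescopingMatrix g w Λ n n * w n = g n / Λ n := by
    simp only [telescopingMatrix, lt_irrefl, if_false, if_true]
    field_simp [hw n]
  have htel : ∑ j ∈ Ico m n, (g j - g (j + 1)) = g m - g n := by
    rw [← neg_sub (g n), ← sum_Ico_sub g hmn, ← sum_neg_distrib]
    simp only [neg_sub]
  rw [sum_Ico_succ_top hmn, sum_congr rfl hlt, hdiag, ← sum_div, htel, ← add_div, sub_add_cancel]

theorem sum_telescopingMatrix_mul_telescopingMatrixInv (hg : ∀ k, g k ≠ 0)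
    (hw : ∀ j, w j ≠ 0) (hΛ : ∀ k, Λ k ≠ 0) (n k : ℕ) :
    ∑ j ∈ range (n + 1), telescopingMatrix g w Λ n j * telescopingMatrixInv g w Λ j k =
      if n = k then 1 else 0 := by
  have hhead : ∀ m, ∑ j ∈ range (m + 1),
      telescopingMatrix g w Λ n j * telescopingMatrixInv g w Λ j m =
        telescopingMatrix g w Λ n m * telescopingMatrixInv g w Λ m m := fun m =>
    sum_eq_single_of_mem m (self_mem_range_succ m) fun j hj hjm => by
      rw [telescopingMatrixInv_of_lt (by rw [mem_range] at hj; omega), mul_zero]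
  rcases lt_trichotomy n k with hnk | rfl | hkn
  · rw [if_neg hnk.ne, sum_eq_zero fun j hj => by
      rw [telescopingMatrixInv_of_lt (by rw [mem_range] at hj; omega), mul_zero]]
  · rw [if_pos rfl, hhead]
    simp only [telescopingMatrix, telescopingMatrixInv, lt_irrefl, if_false, if_true]
    field_simp [hg n, hw n, hΛ n]
  · have htail : ∑ j ∈ Ico (k + 1) (n + 1),
        telescopingMatrix g w Λ n j * telescopingMatrixInv g w Λ j k =
          Λ k * ((g k)⁻¹ - (g (k + 1))⁻¹) * (g (k + 1) / Λ n) := by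
      rw [← sum_Ico_telescopingMatrix_mul hw hkn, mul_sum]
      refine sum_congr rfl fun j hj => ?_
      rw [telescopingMatrixInv, if_pos (by rw [mem_Ico] at hj; omega)]
      ring
    rw [if_neg hkn.ne', ← sum_range_add_sum_Ico _ (by omega : k + 1 ≤ n + 1), hhead, htail]
    simp only [telescopingMatrix, telescopingMatrixInv, hkn, lt_irrefl, if_false, if_true]
    field_simp [hg k, hg (k + 1), hw k, hΛ k, hΛ n]
    ring

end Telescoping

theorem fibR_pos : ∀ n, 0 < fibR n
  | 0 => by norm_num [fibR]
  | 1 => by norm_num [fibR]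
  | n + 2 => add_pos (fibR_pos (n + 1)) (fibR_pos n)

theorem fibR_ne_zero (n : ℕ) : fibR n ≠ 0 := (fibR_pos n).ne'

theorem sub_prev_pos {Λ : ℕ → ℝ} (hmono : StrictMono Λ) (hpos : ∀ k, 0 < Λ k) (k : ℕ) :
    0 < Λ k - if k = 0 then 0 else Λ (k - 1) := by
  cases k with
  | zero => simpa using hpos 0
  | succ k => simpa using hmono k.lt_succ_self

noncomputable def fibGap (Λ : ℕ → ℝ) (k : ℕ) : ℝ :=
  (Λ k - if k = 0 then 0 else Λ (k - 1)) * (fibR k * fibR (k + 1))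

theorem fibGap_ne_zero {Λ : ℕ → ℝ} (hmono : StrictMono Λ) (hpos : ∀ k, 0 < Λ k) (k : ℕ) :
    fibGap Λ k ≠ 0 :=
  mul_ne_zero (sub_prev_pos hmono hpos k).ne' (mul_ne_zero (fibR_ne_zero k) (fibR_ne_zero _))

theorem Fmat_eq_telescopingMatrix (Λ : ℕ → ℝ) :
    Fmat Λ = telescopingMatrix (fibGap Λ) (fun j => fibR (j + 1) ^ 2) Λ := by
  ext n j
  have hf := fibR_ne_zero (j + 1)
  rcases lt_trichotomy j n with h | rfl | h
  · rw [Fmat, telescopingMatrix, if_pos h, if_pos h, fibGap, fibGap, Nat.add_sub_cancel,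
      if_neg j.succ_ne_zero]
    field_simp
  · rw [Fmat, telescopingMatrix, if_neg (lt_irrefl j), if_neg (lt_irrefl j), if_pos rfl,
      if_pos rfl, fibGap]
    field_simp
  · rw [Fmat, telescopingMatrix, if_neg h.not_gt, if_neg h.not_gt, if_neg h.ne',
      if_neg h.ne']

theorem FmatInv_eq_telescopingMatrixInv (Λ : ℕ → ℝ) :
    FmatInv Λ = telescopingMatrixInv (fibGap Λ) (fun j => fibR (j + 1) ^ 2) Λ := by
  ext j k
  rcases lt_trichotomy k j with h | rfl | h
  · rw [FmatInv, telescopingMatrixInv, if_pos h, if_pos h, fibGap, fibGap, Nat.add_sub_cancel,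
      if_neg k.succ_ne_zero, one_div, one_div]
  · rw [FmatInv, telescopingMatrixInv, if_neg (lt_irrefl k), if_neg (lt_irrefl k), if_pos rfl,
      if_pos rfl, fibGap]
  · rw [FmatInv, telescopingMatrixInv, if_neg h.not_gt, if_neg h.not_gt, if_neg h.ne',
      if_neg h.ne']

theorem Fmat_mul_FmatInv_general (Λ : ℕ → ℝ) (hmono : StrictMono Λ) (hpos : ∀ k, 0 < Λ k)
    (n k : ℕ) :
    ∑ j ∈ Finset.range (n + 1), Fmat Λ n j * FmatInv Λ j k =
      if n = k then 1 else 0 := by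
  rw [Fmat_eq_telescopingMatrix, FmatInv_eq_telescopingMatrixInv]
  exact sum_telescopingMatrix_mul_telescopingMatrixInv (fibGap_ne_zero hmono hpos)
    (fun j => pow_ne_zero 2 (fibR_ne_zero (j + 1))) (fun k => (hpos k).ne') n k

theorem Fmat_mul_FmatInv (Λ : ℕ → ℝ) (hmono : StrictMono Λ) (hpos : ∀ k, 0 < Λ k)
    (hlim : Tendsto Λ atTop atTop) (n k : ℕ) :
    ∑ j ∈ Finset.range (n + 1), Fmat Λ n j * FmatInv Λ j k =
      if n = k then 1 else 0 :=
  Fmat_mul_FmatInv_general Λ hmono hpos n k
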